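/- Let k ≥ 0 and let ξ ∈ ℝ^{2n} be such that the function t ↦ ξ·D_t ξ has vanishing derivative of order j at t = 0 for every j ≤ 2k+1 (including the value at t=0). Then ξ is orthogonal to V_k. -/

import Mathlib

open Matrix MeasureTheory intervalIntegral

/-!
Writing `w_x` for the vectors `Re l_k, Im l_k`, the derivative of `t ↦ ξ ⬝ D_t ξ` is
`Σ_x (ξ ⬝ e^{tA} w_x)²`, a sum of squares of smooth functions whose `j`-th derivatives at `0` are
`ξ ⬝ A^j w_x`. If the derivatives of a sum of squares vanish up to order `2k`, the Leibniz rule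
shows inductively that those of every summand vanish up to order `k`: once the lower derivatives
are known to vanish, the `2m`-th derivative of the sum is `C(2m, m) Σ_x (ξ ⬝ A^m w_x)²`.
Hence `ξ ⊥ A^j V₀` for `j ≤ k`. Finally `A - F = NΩ` has range in `V₀`, so
`V₀ + F V₀ + ⋯ + F^k V₀ ⊆ V₀ + A V₀ + ⋯ + A^k V₀`.
-/

open Finset NormedSpace
open scoped ContDiff

theorem iteratedDeriv_two_mul_sq_eq {g : ℝ → ℝ} {x : ℝ} {m : ℕ}
    (hg : ContDiffAt ℝ (2 * m : ℕ) g x) (hlow : ∀ j < m, iteratedDeriv j g x = 0) :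
    iteratedDeriv (2 * m) (fun t => g t ^ 2) x = (2 * m).choose m * iteratedDeriv m g x ^ 2 := by
  simp only [sq]
  rw [iteratedDeriv_fun_mul hg hg, sum_eq_single_of_mem m (by simp; omega)]
  · rw [show 2 * m - m = m by omega, mul_assoc]
  · intro j hj hjm
    rcases lt_or_gt_of_ne hjm with hlt | hgt
    · simp [hlow j hlt]
    · simp [hlow (2 * m - j) (by simp at hj; omega)]

theorem iteratedDeriv_eq_zero_of_iteratedDeriv_sum_sq_eq_zero {ι : Type*} {s : Finset ι}
    {g : ι → ℝ → ℝ} {x : ℝ} {k : ℕ} (hg : ∀ i ∈ s, ContDiffAt ℝ (2 * k : ℕ) (g i) x)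
    (h : ∀ j ≤ 2 * k, iteratedDeriv j (fun t => ∑ i ∈ s, g i t ^ 2) x = 0) :
    ∀ j ≤ k, ∀ i ∈ s, iteratedDeriv j (g i) x = 0 := by
  intro m
  induction m using Nat.strong_induction_on with
  | _ m ih =>
    intro hm i hi
    have hgm : ∀ i ∈ s, ContDiffAt ℝ (2 * m : ℕ) (g i) x :=
      fun i hi => (hg i hi).of_le (by exact_mod_cast (by omega : 2 * m ≤ 2 * k))
    have hsum := h (2 * m) (by omega)
    rw [iteratedDeriv_fun_sum fun i hi => (hgm i hi).pow 2,
      sum_congr rfl fun i hi => iteratedDeriv_two_mul_sq_eq (hgm i hi)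
        fun j hj => ih j hj (by omega) i hi] at hsum
    have hchoose : (0 : ℝ) < (2 * m).choose m := by exact_mod_cast Nat.choose_pos (by omega)
    have := (sum_eq_zero_iff_of_nonneg fun i _ => by positivity).mp hsum i hi
    simpa [hchoose.ne'] using this

namespace Matrix

theorem dotProduct_of_intervalIntegral_mulVec {m n : Type*} [Fintype m] [Fintype n]
    {H : ℝ → Matrix m n ℝ} {a b : ℝ}
    (hH : ∀ i j, IntervalIntegrable (fun s => H s i j) volume a b) (ξ : m → ℝ) (η : n → ℝ) :
    ξ ⬝ᵥ (of fun i j => ∫ s in a..b, H s i j) *ᵥ η = ∫ s in a..b, ξ ⬝ᵥ H s *ᵥ η := by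
  have hrow : ∀ i, IntervalIntegrable (fun s => ∑ j, H s i j * η j) volume a b := fun i => by
    have := IntervalIntegrable.sum univ fun j _ => (hH i j).mul_const (η j)
    rwa [sum_fn] at this
  simp only [dotProduct, mulVec, of_apply]
  rw [integral_finsetSum fun i _ => (hrow i).const_mul _]
  refine sum_congr rfl fun i _ => ?_
  rw [intervalIntegral.integral_const_mul, integral_finsetSum fun j _ => (hH i j).mul_const _]
  simp only [intervalIntegral.integral_mul_const]

theorem dotProduct_mul_sum_vecMulVec_mul_transpose_mulVec {R m n ι : Type*} [CommSemiring R]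
    [Fintype m] [Fintype n] (s : Finset ι) (E : Matrix m n R) (w : ι → n → R) (ξ : m → R) :
    ξ ⬝ᵥ (E * (∑ i ∈ s, vecMulVec (w i) (w i)) * Eᵀ) *ᵥ ξ = ∑ i ∈ s, (ξ ⬝ᵥ E *ᵥ w i) ^ 2 := by
  rw [← mulVec_mulVec, ← mulVec_mulVec, sum_mulVec, mulVec_sum, dotProduct_sum]
  refine sum_congr rfl fun i _ => ?_
  rw [mulVec_transpose, vecMulVec_mulVec, mulVec_smul, dotProduct_smul, dotProduct_mulVec ξ E,
    dotProduct_comm (ξ ᵥ* E)]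
  simp [sq]

theorem sum_vecMulVec_sub_vecMulVec_mulVec_mem_span {R n ι : Type*} [CommRing R] [Fintype n]
    (s : Finset ι) (a b : ι → n → R) (x : n → R) :
    (∑ k ∈ s, (vecMulVec (a k) (b k) - vecMulVec (b k) (a k))) *ᵥ x
      ∈ Submodule.span R (Set.range a ∪ Set.range b) := by
  rw [sum_mulVec]
  refine Submodule.sum_mem _ fun k _ => ?_
  rw [sub_mulVec, vecMulVec_mulVec, vecMulVec_mulVec, op_smul_eq_smul, op_smul_eq_smul]
  exact sub_mem (Submodule.smul_mem _ _ (Submodule.subset_span (Or.inl ⟨k, rfl⟩)))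
    (Submodule.smul_mem _ _ (Submodule.subset_span (Or.inr ⟨k, rfl⟩)))

section Exponential

variable {m : Type*} [Fintype m] [DecidableEq m]

/- `Matrix` carries no canonical norm; the `L∞` operator norm is chosen locally only to use the
Banach-algebra calculus of `exp`, its topology being the product topology. -/
theorem continuous_exp_smul (A : Matrix m m ℝ) : Continuous fun t : ℝ => exp (t • A) := by
  let := Matrix.linftyOpNormedRing (n := m) (α := ℝ)
  let := Matrix.linftyOpNormedAlgebra (n := m) (R := ℝ) (α := ℝ)
  exact continuous_iff_continuousAt.2 fun t => (hasDerivAt_exp_smul_const A t).continuousAt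

theorem hasDerivAt_dotProduct_exp_smul_mulVec (A : Matrix m m ℝ) (ξ w : m → ℝ) (t : ℝ) :
    HasDerivAt (fun s : ℝ => ξ ⬝ᵥ exp (s • A) *ᵥ w) (ξ ⬝ᵥ exp (t • A) *ᵥ (A *ᵥ w)) t := by
  let := Matrix.linftyOpNormedRing (n := m) (α := ℝ)
  let := Matrix.linftyOpNormedAlgebra (n := m) (R := ℝ) (α := ℝ)
  let L : Matrix m m ℝ →L[ℝ] ℝ :=
    (dotProductBilin ℝ ℝ ξ ∘ₗ (mulVecBilin ℝ ℝ).flip w).toContinuousLinearMap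
  rw [mulVec_mulVec]
  exact L.hasFDerivAt.comp_hasDerivAt t (hasDerivAt_exp_smul_const A t)

theorem iteratedDeriv_dotProduct_exp_smul_mulVec (A : Matrix m m ℝ) (ξ w : m → ℝ) (j : ℕ) :
    iteratedDeriv j (fun s : ℝ => ξ ⬝ᵥ exp (s • A) *ᵥ w)
      = fun s => ξ ⬝ᵥ exp (s • A) *ᵥ (A ^ j *ᵥ w) := by
  induction j generalizing w with
  | zero => simp
  | succ j ih =>
    rw [iteratedDeriv_succ',
      funext fun t => (hasDerivAt_dotProduct_exp_smul_mulVec A ξ w t).deriv, ih, pow_succ]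
    simp only [mulVec_mulVec]

theorem contDiff_dotProduct_exp_smul_mulVec (A : Matrix m m ℝ) (ξ w : m → ℝ) :
    ContDiff ℝ ∞ fun s : ℝ => ξ ⬝ᵥ exp (s • A) *ᵥ w :=
  contDiff_of_differentiable_iteratedDeriv fun j _ => by
    rw [iteratedDeriv_dotProduct_exp_smul_mulVec]
    exact fun t => (hasDerivAt_dotProduct_exp_smul_mulVec A ξ _ t).differentiableAt

noncomputable def expGramian (A M : Matrix m m ℝ) (t : ℝ) : Matrix m m ℝ :=
  of fun i j => ∫ s in (0 : ℝ)..t, (exp (s • A) * M * (exp (s • A))ᵀ) i j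

theorem deriv_dotProduct_expGramian_mulVec {ι : Type*} [Fintype ι] (A : Matrix m m ℝ)
    (w : ι → m → ℝ) (ξ : m → ℝ) :
    deriv (fun t => ξ ⬝ᵥ expGramian A (∑ x, vecMulVec (w x) (w x)) t *ᵥ ξ)
      = fun t => ∑ x, (ξ ⬝ᵥ exp (t • A) *ᵥ w x) ^ 2 := by
  have hcont : Continuous fun s : ℝ =>
      exp (s • A) * (∑ x, vecMulVec (w x) (w x)) * (exp (s • A))ᵀ :=
    ((continuous_exp_smul A).matrix_mul continuous_const).matrix_mul
      (continuous_exp_smul A).matrix_transpose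
  have hsq : Continuous fun s => ∑ x, (ξ ⬝ᵥ exp (s • A) *ᵥ w x) ^ 2 :=
    continuous_finsetSum _ fun x _ =>
      (contDiff_dotProduct_exp_smul_mulVec A ξ (w x)).continuous.pow 2
  have hintegral : (fun t => ξ ⬝ᵥ expGramian A (∑ x, vecMulVec (w x) (w x)) t *ᵥ ξ)
      = fun t => ∫ s in (0 : ℝ)..t, ∑ x, (ξ ⬝ᵥ exp (s • A) *ᵥ w x) ^ 2 := by
    ext t
    rw [expGramian, dotProduct_of_intervalIntegral_mulVec
      fun i j => (hcont.matrix_elem i j).intervalIntegrable _ _]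
    simp only [dotProduct_mul_sum_vecMulVec_mul_transpose_mulVec]
  rw [hintegral]
  exact funext fun t => hsq.deriv_integral _ 0 t

theorem dotProduct_pow_mulVec_eq_zero_of_iteratedDeriv_expGramian {ι : Type*} [Fintype ι]
    (A : Matrix m m ℝ) (w : ι → m → ℝ) (ξ : m → ℝ) {k : ℕ}
    (h : ∀ j ≤ 2 * k + 1, iteratedDeriv j
      (fun t => ξ ⬝ᵥ expGramian A (∑ x, vecMulVec (w x) (w x)) t *ᵥ ξ) 0 = 0) :
    ∀ j ≤ k, ∀ x, ξ ⬝ᵥ A ^ j *ᵥ w x = 0 := by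
  have hsq := iteratedDeriv_eq_zero_of_iteratedDeriv_sum_sq_eq_zero (s := univ) (x := 0) (k := k)
    (fun x _ => (contDiff_dotProduct_exp_smul_mulVec A ξ (w x)).contDiffAt.of_le ENat.LEInfty.out)
    (fun j hj => by
      rw [← deriv_dotProduct_expGramian_mulVec, ← iteratedDeriv_succ']
      exact h (j + 1) (by omega))
  intro j hj x
  simpa [iteratedDeriv_dotProduct_exp_smul_mulVec] using hsq j hj x (mem_univ x)

end Exponential

section Krylov

variable {R n : Type*} [CommRing R] [Fintype n] [DecidableEq n]

def krylovSubspace (A : Matrix n n R) (V : Submodule R (n → R)) (j : ℕ) : Submodule R (n → R) :=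
  ⨆ i ∈ range (j + 1), V.map (A ^ i).mulVecLin

variable {A B : Matrix n n R} {V : Submodule R (n → R)}

theorem krylovSubspace_le_iff {j : ℕ} {P : Submodule R (n → R)} :
    krylovSubspace A V j ≤ P ↔ ∀ i ≤ j, ∀ v ∈ V, A ^ i *ᵥ v ∈ P := by
  simp only [krylovSubspace, iSup₂_le_iff, mem_range, Nat.lt_succ_iff,
    Submodule.map_le_iff_le_comap]
  rfl

theorem pow_mulVec_mem_krylovSubspace {i j : ℕ} (hij : i ≤ j) {v : n → R} (hv : v ∈ V) :
    A ^ i *ᵥ v ∈ krylovSubspace A V j :=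
  (le_iSup₂ (f := fun i (_ : i ∈ range (j + 1)) => V.map (A ^ i).mulVecLin) i
    (mem_range.2 (Nat.lt_succ_of_le hij))) ⟨v, hv, rfl⟩

theorem le_krylovSubspace (j : ℕ) : V ≤ krylovSubspace A V j := fun v hv => by
  simpa using pow_mulVec_mem_krylovSubspace (A := A) (Nat.zero_le j) hv

theorem krylovSubspace_mono : Monotone (krylovSubspace A V) := fun _ _ hjk =>
  krylovSubspace_le_iff.2 fun _ hi _ hv => pow_mulVec_mem_krylovSubspace (hi.trans hjk) hv

theorem mulVec_mem_krylovSubspace_succ (h : ∀ x, (B - A) *ᵥ x ∈ V) {j : ℕ} {x : n → R}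
    (hx : x ∈ krylovSubspace B V j) : A *ᵥ x ∈ krylovSubspace B V (j + 1) := by
  suffices krylovSubspace B V j ≤ (krylovSubspace B V (j + 1)).comap A.mulVecLin from this hx
  refine krylovSubspace_le_iff.2 fun i hi v hv => ?_
  have hsplit : A *ᵥ (B ^ i *ᵥ v) = B ^ (i + 1) *ᵥ v - (B - A) *ᵥ (B ^ i *ᵥ v) := by
    rw [sub_mulVec, pow_succ', ← mulVec_mulVec, sub_sub_cancel]
  rw [Submodule.mem_comap, mulVecLin_apply, hsplit]
  exact sub_mem (pow_mulVec_mem_krylovSubspace (by omega) hv) (le_krylovSubspace _ (h _))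

theorem krylovSubspace_le_of_forall_sub_mulVec_mem (h : ∀ x, (B - A) *ᵥ x ∈ V) (j : ℕ) :
    krylovSubspace A V j ≤ krylovSubspace B V j := by
  have hpow : ∀ i, ∀ v ∈ V, A ^ i *ᵥ v ∈ krylovSubspace B V i := by
    intro i
    induction i with
    | zero => exact fun v hv => by simpa using le_krylovSubspace 0 hv
    | succ i ih =>
      intro v hv
      rw [pow_succ', ← mulVec_mulVec]
      exact mulVec_mem_krylovSubspace_succ h (ih v hv)
  exact krylovSubspace_le_iff.2 fun i hi v hv => krylovSubspace_mono hi (hpow i v hv)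

theorem dotProduct_eq_zero_of_mem_krylovSubspace_span {S : Set (n → R)} {ξ : n → R} {j : ℕ}
    (h : ∀ i ≤ j, ∀ v ∈ S, ξ ⬝ᵥ A ^ i *ᵥ v = 0) :
    ∀ v ∈ krylovSubspace A (Submodule.span R S) j, ξ ⬝ᵥ v = 0 := by
  refine fun v hv => (krylovSubspace_le_iff (P := LinearMap.ker (dotProductBilin R R ξ))).2
    (fun i hi => ?_) hv
  have : Submodule.span R S ≤ (LinearMap.ker (dotProductBilin R R ξ)).comap (A ^ i).mulVecLin :=
    Submodule.span_le.2 fun v hv => h i hi v hv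
  exact fun u hu => this hu

end Krylov

end Matrix

theorem vanishing_derivatives_imp_perp_general (n K : ℕ)
    (Ω : Matrix (Fin n ⊕ Fin n) (Fin n ⊕ Fin n) ℝ)
    (F : Matrix (Fin n ⊕ Fin n) (Fin n ⊕ Fin n) ℝ)
    (l : Fin K → (Fin n ⊕ Fin n) → ℂ)
    (M : Matrix (Fin n ⊕ Fin n) (Fin n ⊕ Fin n) ℝ)
    (hM : M = ∑ k, (vecMulVec (fun i => (l k i).re) (fun i => (l k i).re)
                  + vecMulVec (fun i => (l k i).im) (fun i => (l k i).im)))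
    (N : Matrix (Fin n ⊕ Fin n) (Fin n ⊕ Fin n) ℝ)
    (hN : N = ∑ k, (vecMulVec (fun i => (l k i).re) (fun i => (l k i).im)
                  - vecMulVec (fun i => (l k i).im) (fun i => (l k i).re)))
    (A : Matrix (Fin n ⊕ Fin n) (Fin n ⊕ Fin n) ℝ) (hA : A = F + N * Ω)
    (V₀ : Submodule ℝ ((Fin n ⊕ Fin n) → ℝ))
    (hV₀ : V₀ = Submodule.span ℝ
      (Set.range (fun k => fun i => (l k i).re) ∪ Set.range (fun k => fun i => (l k i).im)))
    (V : ℕ → Submodule ℝ ((Fin n ⊕ Fin n) → ℝ))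
    (hV : ∀ j : ℕ, V j = ⨆ m ∈ Finset.range (j + 1), Submodule.map (F ^ m).mulVecLin V₀)
    (R : ℝ → Matrix (Fin n ⊕ Fin n) (Fin n ⊕ Fin n) ℝ)
    (hR : ∀ t, R t = NormedSpace.exp (t • A))
    (D : ℝ → Matrix (Fin n ⊕ Fin n) (Fin n ⊕ Fin n) ℝ)
    (hD : ∀ t, D t = Matrix.of fun i j => ∫ s in (0:ℝ)..t, (R s * M * (R s)ᵀ) i j)
    (k : ℕ)
    (ξ : (Fin n ⊕ Fin n) → ℝ)
    (hξ : ∀ j : ℕ, j ≤ 2 * k + 1 →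
      iteratedDeriv j (fun t => ξ ⬝ᵥ (D t).mulVec ξ) 0 = 0) :
    ∀ v ∈ V k, ξ ⬝ᵥ v = 0 := by
  set w : Fin K ⊕ Fin K → (Fin n ⊕ Fin n) → ℝ :=
    Sum.elim (fun k i => (l k i).re) (fun k i => (l k i).im)
  have hMw : M = ∑ x, vecMulVec (w x) (w x) := by
    rw [hM, Fintype.sum_sum_type, ← sum_add_distrib]; rfl
  have hDw : D = expGramian A (∑ x, vecMulVec (w x) (w x)) := by
    ext1 t; simp only [hD, hR, hMw, expGramian]
  have hperp := dotProduct_pow_mulVec_eq_zero_of_iteratedDeriv_expGramian A w ξ (hDw ▸ hξ)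
  have hAF : ∀ x, (A - F) *ᵥ x ∈ V₀ := fun x => by
    rw [hA, add_sub_cancel_left, ← mulVec_mulVec, hN, hV₀]
    exact sum_vecMulVec_sub_vecMulVec_mulVec_mem_span _ _ _ _
  intro v hv
  rw [hV] at hv
  refine dotProduct_eq_zero_of_mem_krylovSubspace_span (S := Set.range w)
    (fun j hj => Set.forall_mem_range.2 (hperp j hj)) v ?_
  rw [Set.Sum.elim_range, ← hV₀]
  exact krylovSubspace_le_of_forall_sub_mulVec_mem hAF k hv

/-- if the function `t ↦ ξ·D_t ξ` has vanishing derivative of order `j`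
at `t = 0` for every `j ≤ 2k+1` (including the value at `t = 0`), then `ξ ⊥ V_k`. -/
theorem vanishing_derivatives_imp_perp (n K : ℕ) (hn : 1 ≤ n)
    (Ω : Matrix (Fin n ⊕ Fin n) (Fin n ⊕ Fin n) ℝ)
    (hΩ : Ω = Matrix.fromBlocks 0 (-1) 1 0)
    (Q : Matrix (Fin n ⊕ Fin n) (Fin n ⊕ Fin n) ℝ) (hQ : Q.IsSymm)
    (F : Matrix (Fin n ⊕ Fin n) (Fin n ⊕ Fin n) ℝ) (hF : F = Ω * Q)
    (l : Fin K → (Fin n ⊕ Fin n) → ℂ)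
    (M : Matrix (Fin n ⊕ Fin n) (Fin n ⊕ Fin n) ℝ)
    (hM : M = ∑ k, (vecMulVec (fun i => (l k i).re) (fun i => (l k i).re)
                  + vecMulVec (fun i => (l k i).im) (fun i => (l k i).im)))
    (N : Matrix (Fin n ⊕ Fin n) (Fin n ⊕ Fin n) ℝ)
    (hN : N = ∑ k, (vecMulVec (fun i => (l k i).re) (fun i => (l k i).im)
                  - vecMulVec (fun i => (l k i).im) (fun i => (l k i).re)))
    (A : Matrix (Fin n ⊕ Fin n) (Fin n ⊕ Fin n) ℝ) (hA : A = F + N * Ω)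
    (V₀ : Submodule ℝ ((Fin n ⊕ Fin n) → ℝ))
    (hV₀ : V₀ = Submodule.span ℝ
      (Set.range (fun k => fun i => (l k i).re) ∪ Set.range (fun k => fun i => (l k i).im)))
    (V : ℕ → Submodule ℝ ((Fin n ⊕ Fin n) → ℝ))
    (hV : ∀ j : ℕ, V j = ⨆ m ∈ Finset.range (j + 1), Submodule.map (F ^ m).mulVecLin V₀)
    (R : ℝ → Matrix (Fin n ⊕ Fin n) (Fin n ⊕ Fin n) ℝ)
    (hR : ∀ t, R t = NormedSpace.exp (t • A))
    (D : ℝ → Matrix (Fin n ⊕ Fin n) (Fin n ⊕ Fin n) ℝ)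
    (hD : ∀ t, D t = Matrix.of fun i j => ∫ s in (0:ℝ)..t, (R s * M * (R s)ᵀ) i j)
    (k : ℕ)
    (ξ : (Fin n ⊕ Fin n) → ℝ)
    (hξ : ∀ j : ℕ, j ≤ 2 * k + 1 →
      iteratedDeriv j (fun t => ξ ⬝ᵥ (D t).mulVec ξ) 0 = 0) :
    ∀ v ∈ V k, ξ ⬝ᵥ v = 0 :=
  vanishing_derivatives_imp_perp_general n K Ω F l M hM N hN A hA V₀ hV₀ V hV R hR D hD k ξ hξ
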